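/- arXiv:2507.07253 — 2 statements merged into one kernel-verified Lean document; each statement's English description precedes it below -/
import Mathlib

section
/- For every natural number n ≥ 0, the Bernoulli polynomial satisfies B_{2n}(5/4) = (8n − (2^{2n} − 2)·B_{2n}) / 2^{4n}, where B_{2n} is the 2n-th Bernoulli number. -/
/-!
The translation formula `B_k(1 + x) = B_k(x) + k x^(k-1)` reduces the claim to the value at `1/4`.
For even `k`, the duplication formula at `x = 1/4` together with the symmetry
`B_k(3/4) = B_k(1 - 1/4) = B_k(1/4)` gives `B_k(1/2) = 2^k B_k(1/4)`, and
`B_k(1/2) = (2^(1-k) - 1) B_k`.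
-/

namespace Polynomial

theorem ratCast_eval_bernoulli (k : ℕ) (q : ℚ) :
    (((bernoulli k).eval q : ℚ) : ℝ) = bernoulliFun k q := by
  rw [bernoulliFun, eval_map_algebraMap]
  exact (aeval_algebraMap_apply_eq_algebraMap_eval q _).symm

theorem bernoulli_eval_mul (k : ℕ) {m : ℕ} (hm : m ≠ 0) (x : ℚ) :
    (bernoulli k).eval (m * x) =
      m ^ k / m * ∑ i ∈ Finset.range m, (bernoulli k).eval (x + i / m) := by
  apply Rat.cast_injective (α := ℝ)
  simpa [ratCast_eval_bernoulli] using bernoulliFun_mul k hm (x : ℝ)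

theorem bernoulli_eval_half (k : ℕ) :
    (bernoulli k).eval (1 / 2 : ℚ) = (2 / 2 ^ k - 1) * _root_.bernoulli k := by
  apply Rat.cast_injective (α := ℝ)
  simpa [ratCast_eval_bernoulli] using bernoulliFun_eval_half k

theorem bernoulli_eval_one_quarter_of_even {k : ℕ} (hk : Even k) :
    (bernoulli k).eval (1 / 4 : ℚ) = (2 / 2 ^ k - 1) * _root_.bernoulli k / 2 ^ k := by
  have hsymm : (bernoulli k).eval (3 / 4 : ℚ) = (bernoulli k).eval (1 / 4) := by
    rw [show (3 / 4 : ℚ) = 1 - 1 / 4 by norm_num, bernoulli_eval_one_sub, hk.neg_one_pow, one_mul]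
  have hdup : (bernoulli k).eval (1 / 2 : ℚ) =
      2 ^ k / 2 * ((bernoulli k).eval (1 / 4) + (bernoulli k).eval (3 / 4)) := by
    convert bernoulli_eval_mul k two_ne_zero (1 / 4) using 3 <;> norm_num [Finset.sum_range_succ]
  rw [hsymm, bernoulli_eval_half] at hdup
  rw [eq_div_iff (by positivity)]
  linear_combination -hdup

end Polynomial

theorem bernoulli_poly_even_at_five_quarters (n : ℕ) :
    (Polynomial.bernoulli (2 * n)).eval (5 / 4 : ℚ) =
      (8 * n - (2 ^ (2 * n) - 2) * bernoulli (2 * n)) / 2 ^ (4 * n) := by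
  rw [show (5 / 4 : ℚ) = 1 + 1 / 4 by norm_num, Polynomial.bernoulli_eval_one_add,
    Polynomial.bernoulli_eval_one_quarter_of_even (even_two_mul n)]
  rcases n with _ | m
  · simp
  · rw [show 2 * (m + 1) - 1 = 2 * m + 1 by omega, show (1 / 4 : ℚ) = 1 / 2 ^ 2 by norm_num,
      div_pow, one_pow, ← pow_mul, show 4 * (m + 1) = 2 * (2 * m + 1) + 2 by ring,
      show 2 * (m + 1) = (2 * m + 1) + 1 by ring]
    field_simp
    push_cast
    ring
end

section
/- Let N be an odd natural number and T > 0 a real number with N² > 4NT + 1. Then there exists a nonzero real-valued symmetric function f on ℤ/N²ℤ (i.e., f(n) = f(−n)) such that its normalized finite Fourier transform satisfies Ff = f and f(n) = 0 for all representatives n with |n| ≤ NT. -/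
open scoped Real

/-- The normalized finite Fourier transform on `ℤ/N²ℤ → ℂ`:
`(F f)(n) = N^{-1} ∑_{m} f(m) e^{-2πi mn/N²}`. -/
noncomputable def finiteFourierSq (N : ℕ) [NeZero (N ^ 2)] (f : ZMod (N ^ 2) → ℂ) :
    ZMod (N ^ 2) → ℂ :=
  fun n => (N : ℂ)⁻¹ *
    ∑ m : ZMod (N ^ 2), f m * Complex.exp (-2 * π * Complex.I * (m.val * n.val) / (N ^ 2 : ℕ))

/-! Let `F` be the transform. Since `F²` is the reflection `n ↦ -n`, `F⁴ = 1` and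
`(1 + F + F² + F³) / 4` projects onto the fixed space of `F`; taking traces,
`4 · dim ker (F - 1) = N² + tr F + tr F² + tr F³`. Each of the three traces is `1`: for `F` and
`F³ = F² F` this is the quadratic Gauss sum `∑_{x mod N²} e(x²/N²) = N`, and for the reflection
it says that `0` is its only fixed point, `N` being odd. So `ker (F - 1)` has dimension
`(N² + 3) / 4 > ⌊NT⌋ + 1`, and some nonzero fixed `f` vanishes at `0, 1, …, ⌊NT⌋`. Fixed
functions are even, so `f` vanishes wherever `|n| ≤ NT`; conjugation preserves even fixed
functions, so the real or the imaginary part of `f` is a nonzero real solution. -/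

open Finset Module ComplexConjugate
open scoped ZMod

theorem LinearMap.trace_eq_sum_apply_single {R ι : Type*} [CommRing R] [Fintype ι]
    [DecidableEq ι] (f : (ι → R) →ₗ[R] ι → R) :
    trace R _ f = ∑ i, f (Pi.single i 1) i := by
  rw [← Matrix.toLin'_toMatrix' f, Matrix.trace_toLin'_eq, Matrix.toLin'_toMatrix']
  simp [Matrix.trace, toMatrix'_apply]

theorem LinearMap.natCast_mul_finrank_ker_sub_one_eq_sum_trace_pow {K V : Type*} [Field K]
    [AddCommGroup V] [Module K V] [FiniteDimensional K V] {f : Module.End K V} {n : ℕ}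
    (hf : f ^ n = 1) (hn : (n : K) ≠ 0) :
    (n : K) * finrank K (ker (f - 1)) = ∑ i ∈ Finset.range n, trace K V (f ^ i) := by
  set S := ∑ i ∈ Finset.range n, f ^ i
  have hfS : (f - 1) * S = 0 := by rw [mul_geom_sum, hf, sub_self]
  have hproj : IsProj (ker (f - 1)) ((n : K)⁻¹ • S) := by
    refine ⟨fun x => ?_, fun x hx => ?_⟩
    · rw [mem_ker, smul_apply, map_smul, ← Module.End.mul_apply, hfS, zero_apply, smul_zero]
    · rw [mem_ker, sub_apply, Module.End.one_apply, sub_eq_zero] at hx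
      have hpow (i : ℕ) : (f ^ i) x = x := by rw [Module.End.pow_apply, Function.iterate_fixed hx]
      simp only [S, smul_apply, sum_apply, hpow, Finset.sum_const, Finset.card_range]
      rw [← Nat.cast_smul_eq_nsmul K, smul_smul, inv_mul_cancel₀ hn, one_smul]
  rw [← hproj.trace, map_smul, map_sum, smul_eq_mul, mul_inv_cancel_left₀ hn]

theorem Submodule.exists_ne_zero_forall_mem_eq_zero {K ι : Type*} [Field K] [Finite ι]
    (W : Submodule K (ι → K)) (s : Finset ι) (hs : #s < finrank K W) :
    ∃ f ∈ W, f ≠ 0 ∧ ∀ i ∈ s, f i = 0 := by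
  let restrict : W →ₗ[K] (s → K) := (LinearMap.funLeft K K ((↑) : s → ι)).comp W.subtype
  have hker : LinearMap.ker restrict ≠ ⊥ :=
    LinearMap.ker_ne_bot_of_finrank_lt (by simpa using hs)
  obtain ⟨f, hf, hf0⟩ := (Submodule.ne_bot_iff _).mp hker
  exact ⟨f, f.2, fun h => hf0 (Subtype.ext h),
    fun i hi => congrFun (LinearMap.mem_ker.mp hf) ⟨i, hi⟩⟩

namespace ZMod

theorem stdAddChar_neg_mul_eq_exp {M : ℕ} [NeZero M] (m n : ZMod M) :
    stdAddChar (-(m * n)) = Complex.exp (-2 * π * Complex.I * (m.val * n.val) / M) := by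
  have h : -(m * n) = ((-(m.val * n.val : ℤ) : ℤ) : ZMod M) := by push_cast; simp
  rw [h, stdAddChar_coe]
  congr 1
  push_cast
  ring

theorem conj_stdAddChar {M : ℕ} [NeZero M] (x : ZMod M) :
    conj (stdAddChar x) = stdAddChar (-x) := by
  rw [AddChar.starComp_apply (by simp [ringChar_zmod_n, NeZero.pos]), AddChar.inv_apply]

theorem dft_single {M : ℕ} [NeZero M] (j k : ZMod M) :
    𝓕 (Pi.single j (1 : ℂ)) k = stdAddChar (-(j * k)) := by
  simp [dft_apply, Pi.single_apply]

theorem trace_funLeft_neg {R : Type*} [CommRing R] {M : ℕ} [NeZero M] (hM : Odd M) :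
    LinearMap.trace R _ (LinearMap.funLeft R R (Neg.neg : ZMod M → ZMod M)) = 1 := by
  have hfix (i : ZMod M) : -i = i ↔ i = 0 := by
    rw [neg_eq_self_iff, or_iff_left]
    obtain ⟨k, rfl⟩ := hM
    omega
  simp [LinearMap.trace_eq_sum_apply_single, LinearMap.funLeft_apply, Pi.single_apply, hfix]

theorem apply_eq_zero_of_natAbs_valMinAbs_le {M t : ℕ} {α : Type*} [Zero α]
    {f : ZMod M → α} (hf : ∀ n, f (-n) = f n) (hvan : ∀ j ≤ t, f j = 0) {n : ZMod M}
    (hn : n.valMinAbs.natAbs ≤ t) : f n = 0 := by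
  have hcast := coe_valMinAbs n
  rcases Int.natAbs_eq n.valMinAbs with h | h
  · rw [h, Int.cast_natCast] at hcast
    rw [← hcast, hvan _ hn]
  · rw [h, Int.cast_neg, Int.cast_natCast] at hcast
    rw [← hcast, hf, hvan _ hn]

variable {N : ℕ} [NeZero N]

theorem sum_univ_sq_eq_sum_sum {M : Type*} [AddCommMonoid M] (g : ZMod (N ^ 2) → M) :
    ∑ x, g x = ∑ a : ZMod N, ∑ b : ZMod N, g (a.val + N * b.val) := by
  have hsurj : Function.Surjective
      fun p : ZMod N × ZMod N => (p.1.val + N * p.2.val : ZMod (N ^ 2)) := by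
    intro x
    refine ⟨((x.val : ZMod N), ((x.val / N : ℕ) : ZMod N)), ?_⟩
    have hlt : x.val / N < N := Nat.div_lt_of_lt_mul (by rw [← sq]; exact x.val_lt)
    simp only [val_natCast, Nat.mod_eq_of_lt hlt]
    rw [← Nat.cast_mul, ← Nat.cast_add, Nat.mod_add_div, natCast_zmod_val]
  rw [← Fintype.sum_prod_type']
  exact (Fintype.sum_bijective _ ((Fintype.bijective_iff_surjective_and_card _).2
    ⟨hsurj, by simp [card, sq]⟩) _ _ fun _ => rfl).symm

theorem stdAddChar_natCast_mul (j : ℕ) :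
    stdAddChar ((N * j : ℕ) : ZMod (N ^ 2)) = stdAddChar (j : ZMod N) := by
  have hN : (N : ℂ) ≠ 0 := NeZero.ne _
  rw [← Int.cast_natCast, ← Int.cast_natCast (R := ZMod N), stdAddChar_coe, stdAddChar_coe]
  congr 1
  push_cast
  field_simp

theorem sum_stdAddChar_mul_self (hN : Odd N) :
    ∑ x : ZMod (N ^ 2), stdAddChar (x * x) = N := by
  have hsq : (N : ZMod (N ^ 2)) ^ 2 = 0 := by exact_mod_cast natCast_self (N ^ 2)
  -- `(a + N b)² = a² + N (2ab)` in `ZMod (N ^ 2)`, so the sum over `b` is a character sum on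
  -- `ZMod N`, which vanishes unless `2a = 0`, i.e. `a = 0`.
  have hexpand (a b : ZMod N) :
      let x : ZMod (N ^ 2) := a.val + N * b.val
      stdAddChar (x * x) =
        stdAddChar ((a.val * a.val : ℕ) : ZMod (N ^ 2)) * stdAddChar (b * (2 * a)) := by
    have hcast : ((2 * a.val * b.val : ℕ) : ZMod N) = b * (2 * a) := by
      push_cast
      rw [natCast_zmod_val, natCast_zmod_val]
      ring
    rw [← hcast, ← stdAddChar_natCast_mul (N := N), ← AddChar.map_add_eq_mul]
    congr 1
    push_cast
    linear_combination ((b.val : ZMod (N ^ 2)) * b.val) * hsq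
  have hinner (a : ZMod N) :
      ∑ b : ZMod N, stdAddChar (b * (2 * a)) = if a = 0 then (N : ℂ) else 0 := by
    have h2 : IsUnit (2 : ZMod N) := by
      simpa using (isUnit_iff_coprime 2 N).mpr hN.coprime_two_left
    rw [AddChar.sum_mulShift _ (isPrimitive_stdAddChar N), card]
    simp [h2.mul_right_eq_zero]
  simp_rw [sum_univ_sq_eq_sum_sum, hexpand, ← mul_sum, hinner]
  simp

end ZMod

section FiniteFourierSq

variable {N : ℕ} [NeZero N]

variable (N) in
noncomputable def finiteFourierSqₗ : Module.End ℂ (ZMod (N ^ 2) → ℂ) :=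
  (N : ℂ)⁻¹ • (𝓕 : (ZMod (N ^ 2) → ℂ) ≃ₗ[ℂ] _).toLinearMap

theorem finiteFourierSqₗ_apply (f : ZMod (N ^ 2) → ℂ) :
    finiteFourierSqₗ N f = finiteFourierSq N f := by
  ext n
  simp only [finiteFourierSqₗ, finiteFourierSq, LinearMap.smul_apply, LinearEquiv.coe_coe,
    Pi.smul_apply, ZMod.dft_apply, smul_eq_mul, mul_sum, ZMod.stdAddChar_neg_mul_eq_exp,
    mul_comm (f _)]

theorem finiteFourierSqₗ_sq : finiteFourierSqₗ N ^ 2 = LinearMap.funLeft ℂ ℂ Neg.neg := by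
  have hN : (N : ℂ) ≠ 0 := NeZero.ne _
  refine LinearMap.ext fun f => funext fun n => ?_
  simp only [sq, Module.End.mul_apply, finiteFourierSqₗ, LinearMap.smul_apply,
    LinearEquiv.coe_coe, LinearEquiv.map_smul, ZMod.dft_dft, LinearMap.funLeft_apply,
    Pi.smul_apply, smul_eq_mul]
  push_cast
  field_simp

theorem finiteFourierSqₗ_pow_four : finiteFourierSqₗ N ^ 4 = 1 := by
  rw [show 4 = 2 * 2 from rfl, pow_mul, finiteFourierSqₗ_sq]
  ext f n
  simp [sq, LinearMap.funLeft_apply]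

theorem trace_finiteFourierSqₗ (hN : Odd N) : LinearMap.trace ℂ _ (finiteFourierSqₗ N) = 1 := by
  have hN0 : (N : ℂ) ≠ 0 := NeZero.ne _
  simp only [LinearMap.trace_eq_sum_apply_single, finiteFourierSqₗ, LinearMap.smul_apply,
    LinearEquiv.coe_coe, Pi.smul_apply, ZMod.dft_single, smul_eq_mul, ← mul_sum,
    ← ZMod.conj_stdAddChar, ← map_sum, ZMod.sum_stdAddChar_mul_self hN, Complex.conj_natCast,
    inv_mul_cancel₀ hN0]

theorem trace_finiteFourierSqₗ_pow_three (hN : Odd N) :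
    LinearMap.trace ℂ _ (finiteFourierSqₗ N ^ 3) = 1 := by
  have hN0 : (N : ℂ) ≠ 0 := NeZero.ne _
  rw [pow_succ (finiteFourierSqₗ N) 2, finiteFourierSqₗ_sq]
  simp only [LinearMap.trace_eq_sum_apply_single, Module.End.mul_apply,
    LinearMap.funLeft_apply, finiteFourierSqₗ, LinearMap.smul_apply, LinearEquiv.coe_coe,
    Pi.smul_apply, ZMod.dft_single, smul_eq_mul, ← mul_sum, mul_neg, neg_neg,
    ZMod.sum_stdAddChar_mul_self hN, inv_mul_cancel₀ hN0]

theorem four_mul_finrank_ker_finiteFourierSqₗ_sub_one (hN : Odd N) :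
    4 * finrank ℂ (LinearMap.ker (finiteFourierSqₗ N - 1)) = N ^ 2 + 3 := by
  have h := LinearMap.natCast_mul_finrank_ker_sub_one_eq_sum_trace_pow
    (finiteFourierSqₗ_pow_four (N := N)) (by norm_num : ((4 : ℕ) : ℂ) ≠ 0)
  simp only [sum_range_succ, sum_range_zero, pow_zero, pow_one, LinearMap.trace_one,
    finiteFourierSqₗ_sq, ZMod.trace_funLeft_neg (hN.pow : Odd (N ^ 2)),
    trace_finiteFourierSqₗ hN, trace_finiteFourierSqₗ_pow_three hN, finrank_fintype_fun_eq_card,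
    ZMod.card] at h
  have h' : 4 * finrank ℂ (LinearMap.ker (finiteFourierSqₗ N - 1)) = 0 + N ^ 2 + 1 + 1 + 1 := by
    exact_mod_cast h
  omega

theorem mem_ker_finiteFourierSqₗ_sub_one {f : ZMod (N ^ 2) → ℂ} :
    f ∈ LinearMap.ker (finiteFourierSqₗ N - 1) ↔ finiteFourierSq N f = f := by
  rw [LinearMap.mem_ker, LinearMap.sub_apply, Module.End.one_apply, sub_eq_zero,
    finiteFourierSqₗ_apply]

theorem neg_apply_of_finiteFourierSq_eq_self {f : ZMod (N ^ 2) → ℂ}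
    (hf : finiteFourierSq N f = f) (n : ZMod (N ^ 2)) : f (-n) = f n := by
  have h := LinearMap.congr_fun (finiteFourierSqₗ_sq (N := N)) f
  simp only [pow_two (finiteFourierSqₗ N), Module.End.mul_apply, finiteFourierSqₗ_apply, hf] at h
  exact (congrFun h n).symm

theorem finiteFourierSq_conj (f : ZMod (N ^ 2) → ℂ) (n : ZMod (N ^ 2)) :
    finiteFourierSq N (conj ∘ f) n = conj (finiteFourierSq N f (-n)) := by
  simp only [← finiteFourierSqₗ_apply, finiteFourierSqₗ, LinearMap.smul_apply,
    LinearEquiv.coe_coe, Pi.smul_apply, ZMod.dft_apply, smul_eq_mul, map_mul, map_sum, map_inv₀,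
    Complex.conj_natCast, Function.comp_apply, ZMod.conj_stdAddChar, mul_neg, neg_neg]

theorem finiteFourierSq_conj_of_eq_self {f : ZMod (N ^ 2) → ℂ}
    (hf : finiteFourierSq N f = f) : finiteFourierSq N (conj ∘ f) = conj ∘ f := by
  ext n
  rw [finiteFourierSq_conj, hf, Function.comp_apply, neg_apply_of_finiteFourierSq_eq_self hf]

theorem exists_real_mem_ker_finiteFourierSqₗ_sub_one {f : ZMod (N ^ 2) → ℂ}
    (hf : f ∈ LinearMap.ker (finiteFourierSqₗ N - 1)) (hf0 : f ≠ 0) :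
    ∃ g ∈ LinearMap.ker (finiteFourierSqₗ N - 1), g ≠ 0 ∧ (∀ n, (g n).im = 0) ∧
      ∀ n, f n = 0 → g n = 0 := by
  set E := LinearMap.ker (finiteFourierSqₗ N - 1)
  have hconj : conj ∘ f ∈ E := mem_ker_finiteFourierSqₗ_sub_one.mpr
    (finiteFourierSq_conj_of_eq_self (mem_ker_finiteFourierSqₗ_sub_one.mp hf))
  have hre : (fun n => ((f n).re : ℂ)) ∈ E := by
    convert E.smul_mem (2 : ℂ)⁻¹ (E.add_mem hf hconj) using 1
    ext n
    simp [Complex.re_eq_add_conj, div_eq_inv_mul]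
  have him : (fun n => ((f n).im : ℂ)) ∈ E := by
    convert E.smul_mem (2 * Complex.I)⁻¹ (E.sub_mem hf hconj) using 1
    ext n
    simp [Complex.im_eq_sub_conj, div_eq_inv_mul]
  by_cases hre0 : (fun n => ((f n).re : ℂ)) = 0
  · refine ⟨_, him, fun him0 => hf0 ?_, fun n => Complex.ofReal_im _, fun n hn => by simp [hn]⟩
    funext n
    apply Complex.ext
    · simpa using congrFun hre0 n
    · simpa using congrFun him0 n
  · exact ⟨_, hre, hre0, fun n => Complex.ofReal_im _, fun n hn => by simp [hn]⟩

end FiniteFourierSq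

theorem exists_real_symmetric_eigenfunction_vanishing (N : ℕ) [NeZero (N ^ 2)] (hN : Odd N)
    (T : ℝ) (hT : 0 < T) (h : (N : ℝ) ^ 2 > 4 * N * T + 1) :
    ∃ f : ZMod (N ^ 2) → ℂ, f ≠ 0 ∧ (∀ n, (f n).im = 0) ∧ (∀ n, f (-n) = f n) ∧
      finiteFourierSq N f = f ∧
      ∀ n : ZMod (N ^ 2), |(n.valMinAbs : ℝ)| ≤ N * T → f n = 0 := by
  have : NeZero N := NeZero.of_pos hN.pos
  set t := ⌊(N : ℝ) * T⌋₊
  have ht : 4 * t + 1 < N ^ 2 := by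
    have := Nat.floor_le (by positivity : 0 ≤ (N : ℝ) * T)
    have : ((4 * t + 1 : ℕ) : ℝ) < N ^ 2 := by push_cast; nlinarith
    exact_mod_cast this
  have hdim := four_mul_finrank_ker_finiteFourierSqₗ_sub_one hN
  have hS : #((Finset.range (t + 1)).image (Nat.cast : ℕ → ZMod (N ^ 2))) <
      finrank ℂ (LinearMap.ker (finiteFourierSqₗ N - 1)) :=
    (card_image_le.trans_eq (card_range _)).trans_lt (by omega)
  obtain ⟨f, hfF, hf0, hfS⟩ := Submodule.exists_ne_zero_forall_mem_eq_zero _ _ hS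
  obtain ⟨g, hgF, hg0, hg_im, hgS⟩ := exists_real_mem_ker_finiteFourierSqₗ_sub_one hfF hf0
  have hgF' := mem_ker_finiteFourierSqₗ_sub_one.mp hgF
  refine ⟨g, hg0, hg_im, neg_apply_of_finiteFourierSq_eq_self hgF', hgF', fun n hn => ?_⟩
  refine ZMod.apply_eq_zero_of_natAbs_valMinAbs_le (t := t)
    (neg_apply_of_finiteFourierSq_eq_self hgF')
    (fun j hj => hgS _ (hfS _ (mem_image_of_mem _ (mem_range.2 (by omega))))) (Nat.le_floor ?_)
  rwa [Nat.cast_natAbs, Int.cast_abs]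
end
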